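/- arXiv:2512.10255 — 6 statements merged into one kernel-verified Lean document; each statement's English description precedes it below -/
import Mathlib

section
/- If a_i ≥ a_j, then the Euclidean projection x* of a onto the set {x ∈ ℝ^n : sum of the k largest entries of x ≤ r} satisfies x*_i ≥ x*_j (the projection preserves the ordering of coordinates). -/
open Finset

/-- The entries of `a` rearranged in nonincreasing order. -/
noncomputable def sortDesc (n : ℕ) (a : Fin n → ℝ) : Fin n → ℝ :=
  fun i => a (Tuple.sort a i.rev)

/-- The sum of the `k` largest entries of `a`. -/
noncomputable def topKSum (n k : ℕ) (a : Fin n → ℝ) : ℝ :=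
  ∑ i : Fin n, if (i : ℕ) < k then sortDesc n a i else 0

lemma antitone_sortDesc (n : ℕ) (a : Fin n → ℝ) : Antitone (sortDesc n a) := by
  intro p q h
  exact Tuple.monotone_sort a (show q.rev ≤ p.rev from Fin.rev_le_rev.mpr h)

lemma le_val_of_strictMono {k n : ℕ} {f : Fin k → Fin n} (hf : StrictMono f) :
    ∀ m : Fin k, (m : ℕ) ≤ (f m : ℕ) := by
  have key : ∀ p : ℕ, ∀ m : Fin k, (m : ℕ) = p → p ≤ (f m : ℕ) := by
    intro p
    induction p with
    | zero => intro m _; exact Nat.zero_le _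
    | succ q ih =>
      intro m hm
      have hq : q < k := by omega
      have h1 : q ≤ (f ⟨q, hq⟩ : ℕ) := ih _ rfl
      have h2 : f ⟨q, hq⟩ < f m := hf (by simp [Fin.lt_def, hm])
      have h3 : (f ⟨q, hq⟩ : ℕ) < (f m : ℕ) := h2
      omega
  intro m; exact key _ m rfl

lemma image_castLE {n k : ℕ} (hk : k ≤ n) :
    (univ : Finset (Fin k)).image (Fin.castLE hk) =
      univ.filter (fun i : Fin n => (i : ℕ) < k) := by
  ext x
  simp only [mem_image, mem_univ, true_and, mem_filter]
  constructor
  · rintro ⟨m, rfl⟩; exact m.isLt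
  · intro hx; exact ⟨⟨(x : ℕ), hx⟩, by ext; rfl⟩

lemma sum_le_of_antitone {n k : ℕ} (b : Fin n → ℝ) (hb : Antitone b)
    (T : Finset (Fin n)) (hT : T.card = k) :
    ∑ t ∈ T, b t ≤ ∑ i : Fin n, if (i : ℕ) < k then b i else 0 := by
  have hk : k ≤ n := by
    have := T.card_le_univ
    simpa [hT] using this
  have e := T.orderIsoOfFin hT
  have hmono : StrictMono (fun m : Fin k => ((e m : T) : Fin n)) := by
    intro p q h
    exact Subtype.coe_lt_coe.mpr (e.strictMono h)
  have h1 : ∑ t ∈ T, b t = ∑ m : Fin k, b ((e m : T) : Fin n) := by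
    rw [← Finset.sum_coe_sort T b]
    exact (Fintype.sum_equiv e.toEquiv _ _ (fun m => rfl)).symm
  have h2 : ∀ m : Fin k, b ((e m : T) : Fin n) ≤ b (Fin.castLE hk m) := by
    intro m
    apply hb
    have := le_val_of_strictMono hmono m
    exact this
  have h3 : ∑ m : Fin k, b (Fin.castLE hk m) =
      ∑ i : Fin n, if (i : ℕ) < k then b i else 0 := by
    have hfil : ∑ i : Fin n, (if (i : ℕ) < k then b i else 0) =
        ∑ i ∈ univ.filter (fun i : Fin n => (i : ℕ) < k), b i :=
      (Finset.sum_filter _ _).symm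
    rw [hfil, ← image_castLE hk,
      Finset.sum_image (fun p _ q _ h => Fin.castLE_injective hk h)]
  calc ∑ t ∈ T, b t = ∑ m : Fin k, b ((e m : T) : Fin n) := h1
    _ ≤ ∑ m : Fin k, b (Fin.castLE hk m) := Finset.sum_le_sum (fun m _ => h2 m)
    _ = _ := h3

/-- Any size-`k` subset sum is at most `topKSum`. -/
lemma sum_le_topKSum {n k : ℕ} (a : Fin n → ℝ) (S : Finset (Fin n)) (hS : S.card = k) :
    ∑ s ∈ S, a s ≤ topKSum n k a := by
  set σ := Tuple.sort a with hσ
  have hinj : Function.Injective (fun s : Fin n => ((σ.symm s).rev)) := by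
    intro p q h
    simpa using h
  have hval : ∀ s : Fin n, sortDesc n a ((σ.symm s).rev) = a s := by
    intro s
    simp [sortDesc, Fin.rev_rev, hσ]
  have hT : (S.image (fun s => (σ.symm s).rev)).card = k := by
    rw [Finset.card_image_of_injective _ hinj, hS]
  have h1 : ∑ s ∈ S, a s = ∑ t ∈ S.image (fun s => (σ.symm s).rev), sortDesc n a t := by
    rw [Finset.sum_image (fun p _ q _ h => hinj h)]
    exact (Finset.sum_congr rfl (fun s _ => hval s)).symm
  rw [h1]
  exact sum_le_of_antitone _ (antitone_sortDesc n a) _ hT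

/-- `topKSum` is attained by some size-`k` subset sum. -/
lemma topKSum_attained {n k : ℕ} (hk : k ≤ n) (a : Fin n → ℝ) :
    ∃ S : Finset (Fin n), S.card = k ∧ topKSum n k a = ∑ s ∈ S, a s := by
  set σ := Tuple.sort a with hσ
  have hinj : Function.Injective (fun i : Fin n => σ i.rev) := by
    intro p q h
    exact Fin.rev_injective (σ.injective h)
  refine ⟨(univ.filter (fun i : Fin n => (i : ℕ) < k)).image (fun i => σ i.rev), ?_, ?_⟩
  · rw [Finset.card_image_of_injective _ hinj, ← image_castLE hk,
      Finset.card_image_of_injective _ (Fin.castLE_injective hk), Finset.card_univ,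
      Fintype.card_fin]
  · rw [Finset.sum_image (fun p _ q _ h => hinj h)]
    simp only [topKSum, sortDesc, hσ]
    rw [Finset.sum_filter]

/-- The Euclidean projection onto the top-`k`-sum constraint preserves the
ordering of coordinates. -/
theorem stmt0 (n k : ℕ) (hn : 1 ≤ n) (hk1 : 1 ≤ k) (hk2 : k ≤ n) (r : ℝ)
    (a xstar : Fin n → ℝ)
    (hmem : topKSum n k xstar ≤ r)
    (hmin : ∀ y : Fin n → ℝ, topKSum n k y ≤ r →
      ∑ i : Fin n, (xstar i - a i) ^ 2 ≤ ∑ i : Fin n, (y i - a i) ^ 2)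
    (i j : Fin n) (hij : a j ≤ a i) :
    xstar j ≤ xstar i := by
  by_contra hcon
  push_neg at hcon
  have hne : i ≠ j := by
    rintro rfl; exact absurd hcon (lt_irrefl _)
  set m : ℝ := (xstar i + xstar j) / 2 with hm
  set z : Fin n → ℝ := fun s => if s = i then m else if s = j then m else xstar s with hz
  -- z is the average of xstar and its swap
  have hzavg : ∀ s, z s = (xstar s + xstar (Equiv.swap i j s)) / 2 := by
    intro s
    rcases eq_or_ne s i with rfl | hsi
    · simp [hz, Equiv.swap_apply_left, hm]
    rcases eq_or_ne s j with rfl | hsj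
    · simp [hz, hsi, Equiv.swap_apply_right, hm]
      try ring
    · simp [hz, hsi, hsj, Equiv.swap_apply_of_ne_of_ne hsi hsj]
      try ring
  -- feasibility of z
  have hzfeas : topKSum n k z ≤ r := by
    obtain ⟨S, hScard, hSeq⟩ := topKSum_attained hk2 z
    rw [hSeq]
    have h1 : ∑ s ∈ S, xstar s ≤ r :=
      le_trans (sum_le_topKSum xstar S hScard) hmem
    have h2 : ∑ s ∈ S, xstar (Equiv.swap i j s) ≤ r := by
      have hswapinj : Function.Injective (Equiv.swap i j) := (Equiv.swap i j).injective
      have : ∑ s ∈ S, xstar (Equiv.swap i j s) = ∑ s ∈ S.image (Equiv.swap i j), xstar s := by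
        rw [Finset.sum_image (fun p _ q _ h => hswapinj h)]
      rw [this]
      refine le_trans (sum_le_topKSum xstar _ ?_) hmem
      rw [Finset.card_image_of_injective _ hswapinj, hScard]
    calc ∑ s ∈ S, z s = (∑ s ∈ S, xstar s + ∑ s ∈ S, xstar (Equiv.swap i j s)) / 2 := by
          rw [← Finset.sum_add_distrib, Finset.sum_div]
          exact Finset.sum_congr rfl (fun s _ => hzavg s)
      _ ≤ r := by linarith
  -- z is strictly better
  have hzoff : ∀ s, s ≠ i → s ≠ j → z s = xstar s := by
    intro s hsi hsj; simp [hz, hsi, hsj]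
  have hsplit : ∀ w : Fin n → ℝ, ∑ s : Fin n, (w s - a s) ^ 2 =
      ∑ s ∈ univ \ {i, j}, (w s - a s) ^ 2 + ((w i - a i) ^ 2 + (w j - a j) ^ 2) := by
    intro w
    have : ({i, j} : Finset (Fin n)) ⊆ univ := Finset.subset_univ _
    rw [← Finset.sum_sdiff this, Finset.sum_pair hne]
  have hzi : z i = m := by simp [hz]
  have hzj : z j = m := by simp [hz, hne.symm]
  have hstrict : ∑ s : Fin n, (z s - a s) ^ 2 < ∑ s : Fin n, (xstar s - a s) ^ 2 := by
    rw [hsplit z, hsplit xstar]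
    have heq : ∑ s ∈ univ \ {i, j}, (z s - a s) ^ 2 =
        ∑ s ∈ univ \ {i, j}, (xstar s - a s) ^ 2 := by
      refine Finset.sum_congr rfl (fun s hs => ?_)
      simp only [Finset.mem_sdiff, Finset.mem_insert, Finset.mem_singleton] at hs
      rw [hzoff s (fun h => hs.2 (Or.inl h)) (fun h => hs.2 (Or.inr h))]
    rw [heq, hzi, hzj]
    have key : (m - a i) ^ 2 + (m - a j) ^ 2 <
        (xstar i - a i) ^ 2 + (xstar j - a j) ^ 2 := by
      have h1 : xstar i < xstar j := hcon
      rw [hm]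
      nlinarith [sq_nonneg (xstar i - xstar j), mul_nonneg (le_of_lt (sub_pos.mpr h1)) (sub_nonneg.mpr hij)]
    linarith
  exact absurd (hmin z hzfeas) (not_le.mpr hstrict)
end

section
/- The function F(u) = (1/k)(min{T_k(a), r} − ∑_{i=1}^n max{a_i − u, 0}) is piecewise linear, nondecreasing, and concave in u; moreover F(u) ≤ u for all u ∈ ℝ. -/
open Finset

/-- A function is piecewise linear if it is affine away from finitely many
breakpoints. -/
def PiecewiseLinear (F : ℝ → ℝ) : Prop :=
  ∃ s : Finset ℝ, ∀ u : ℝ, u ∉ s → ∃ ε > (0:ℝ), ∃ c b : ℝ,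
    ∀ v : ℝ, |v - u| < ε → F v = c * v + b

/-- The function `F` from the KKT analysis. -/
noncomputable def Fproj (n k : ℕ) (r : ℝ) (a : Fin n → ℝ) : ℝ → ℝ :=
  fun u => (1 / (k : ℝ)) * (min (topKSum n k a) r - ∑ i : Fin n, max (a i - u) 0)

private lemma convexOn_finset_sum {ι : Type*} (t : Finset ι) (f : ι → ℝ → ℝ)
    (h : ∀ i ∈ t, ConvexOn ℝ Set.univ (f i)) :
    ConvexOn ℝ Set.univ (fun x => ∑ i ∈ t, f i x) := by
  induction t using Finset.cons_induction with
  | empty => simpa using convexOn_const (0:ℝ) convex_univ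
  | cons i t hi ih =>
    simp only [Finset.sum_cons]
    exact (h i (Finset.mem_cons_self _ _)).add
      (ih fun j hj => h j (Finset.mem_cons_of_mem hj))

/-- `F` is piecewise linear, nondecreasing, concave, and `F u ≤ u`. -/
theorem stmt5 (n k : ℕ) (hn : 1 ≤ n) (hk1 : 1 ≤ k) (hk2 : k ≤ n) (r : ℝ)
    (a : Fin n → ℝ) :
    PiecewiseLinear (Fproj n k r a) ∧
    Monotone (Fproj n k r a) ∧
    ConcaveOn ℝ Set.univ (Fproj n k r a) ∧
    ∀ u : ℝ, Fproj n k r a u ≤ u := by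
  have hkpos : (0:ℝ) < (k:ℝ) := by exact_mod_cast hk1
  have hkinv : (0:ℝ) ≤ 1 / (k:ℝ) := by positivity
  set m : ℝ := min (topKSum n k a) r with hm
  set S : ℝ → ℝ := fun u => ∑ i : Fin n, max (a i - u) 0 with hS
  refine ⟨?_, ?_, ?_, ?_⟩
  · -- Piecewise linear
    refine ⟨Finset.univ.image a, fun u hu => ?_⟩
    have hne : ∀ i : Fin n, a i ≠ u := by
      intro i hiu
      exact hu (Finset.mem_image.2 ⟨i, Finset.mem_univ i, hiu⟩)
    set P : Finset (Fin n) := Finset.univ.filter (fun i => u < a i) with hP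
    have hnemp : (Finset.univ : Finset (Fin n)).Nonempty := ⟨⟨0, hn⟩, Finset.mem_univ _⟩
    set ε : ℝ := Finset.univ.inf' hnemp (fun i => |a i - u|) with hε
    have hεpos : 0 < ε := by
      rw [hε]
      apply Finset.lt_inf'_iff hnemp |>.2
      intro i _
      have := hne i
      have : a i - u ≠ 0 := sub_ne_zero.2 this
      exact abs_pos.2 this
    refine ⟨ε, hεpos, (1 / (k:ℝ)) * P.card, (1 / (k:ℝ)) * (m - ∑ i ∈ P, a i), ?_⟩
    intro v hv
    have hSv : S v = (∑ i ∈ P, a i) - P.card * v := by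
      have h1 : ∀ i : Fin n, max (a i - v) 0 = if u < a i then a i - v else 0 := by
        intro i
        have hεi : ε ≤ |a i - u| := Finset.inf'_le _ (Finset.mem_univ i)
        by_cases hcase : u < a i
        · have : |v - u| < a i - u := lt_of_lt_of_le hv (hεi.trans_eq (abs_of_pos (by linarith)))
          have : v - u < a i - u := lt_of_le_of_lt (le_abs_self _) this
          simp [hcase, max_eq_left, le_of_lt (by linarith : (0:ℝ) < a i - v)]
        · have hlt : a i < u := lt_of_le_of_ne (not_lt.1 hcase) (hne i)
          have : |v - u| < u - a i := lt_of_lt_of_le hv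
            (hεi.trans_eq (by rw [abs_of_neg (by linarith)]; ring))
          have : -(v - u) < u - a i := lt_of_le_of_lt (neg_le_abs _) this
          simp [hcase, max_eq_right, (by linarith : a i - v ≤ 0)]
      simp only [hS]
      rw [Finset.sum_congr rfl (fun i _ => h1 i), Finset.sum_ite, Finset.sum_const_zero,
        add_zero, Finset.sum_sub_distrib, Finset.sum_const, nsmul_eq_mul]
    show (1 / (k:ℝ)) * (m - S v) = _
    rw [hSv]; ring
  · -- Monotone
    intro u v huv
    show (1 / (k:ℝ)) * (m - S u) ≤ (1 / (k:ℝ)) * (m - S v)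
    apply mul_le_mul_of_nonneg_left _ hkinv
    have : S v ≤ S u := by
      apply Finset.sum_le_sum
      intro i _
      exact max_le_max (by linarith) le_rfl
    linarith
  · -- Concave
    have hconv : ConvexOn ℝ Set.univ S := by
      apply convexOn_finset_sum
      intro i _
      have h1 : ConvexOn ℝ Set.univ (fun u : ℝ => a i - u) :=
        (convexOn_const (a i) convex_univ).sub (concaveOn_id convex_univ)
      have h2 : ConvexOn ℝ Set.univ (fun _ : ℝ => (0:ℝ)) := convexOn_const 0 convex_univ
      simpa [Pi.sup_def] using h1.sup h2
    have hconv2 : ConvexOn ℝ Set.univ (fun u => (1 / (k:ℝ)) • S u) := hconv.smul hkinv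
    have hconc2 : ConcaveOn ℝ Set.univ
        ((fun _ : ℝ => (1 / (k:ℝ)) * m) - fun u => (1 / (k:ℝ)) • S u) :=
      (concaveOn_const _ convex_univ).sub hconv2
    have heq : Fproj n k r a
        = (fun _ : ℝ => (1 / (k:ℝ)) * m) - fun u => (1 / (k:ℝ)) • S u := by
      funext u
      show (1 / (k:ℝ)) * (m - S u) = _
      simp only [Pi.sub_apply, smul_eq_mul]
      ring
    rw [heq]; exact hconc2
  · -- F u ≤ u
    intro u
    have hperm : ∀ g : ℝ → ℝ, ∑ i : Fin n, g (sortDesc n a i) = ∑ i : Fin n, g (a i) := by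
      intro g
      have := Equiv.sum_comp ((Fin.revPerm).trans (Tuple.sort a)) (fun j => g (a j))
      simpa [sortDesc, Equiv.trans_apply] using this
    have hcard : ∑ i : Fin n, (if (i:ℕ) < k then u else 0) = (k:ℝ) * u := by
      rw [Fin.sum_univ_eq_sum_range (fun i => if i < k then u else 0)]
      rw [← Finset.sum_filter]
      have : (Finset.range n).filter (· < k) = Finset.range k := by
        ext x; simp; omega
      rw [this, Finset.sum_const, Finset.card_range, nsmul_eq_mul]
    have hkey : topKSum n k a ≤ (k:ℝ) * u + S u := by
      have hSrw : S u = ∑ i : Fin n, max (sortDesc n a i - u) 0 := by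
        rw [hS]
        exact (hperm (fun x => max (x - u) 0)).symm
      rw [hSrw, topKSum, ← hcard, ← Finset.sum_add_distrib]
      apply Finset.sum_le_sum
      intro i _
      by_cases hik : (i:ℕ) < k
      · simp only [hik, if_pos]
        have : sortDesc n a i - u ≤ max (sortDesc n a i - u) 0 := le_max_left _ _
        linarith
      · simp only [hik, if_neg, not_false_iff]
        have : (0:ℝ) ≤ max (sortDesc n a i - u) 0 := le_max_right _ _
        linarith
    show (1 / (k:ℝ)) * (m - S u) ≤ u
    have hmle : m ≤ topKSum n k a := min_le_left _ _
    have h1 : m - S u ≤ (k:ℝ) * u := by linarith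
    calc (1 / (k:ℝ)) * (m - S u) ≤ (1 / (k:ℝ)) * ((k:ℝ) * u) :=
          mul_le_mul_of_nonneg_left h1 hkinv
      _ = u := by field_simp
end

section
/- If r < T_k(a), then F_r(u) < u for all u ∈ ℝ; if r > T_k(a), then there exists u with F_r(u) > u; and if r = T_k(a), then F_r(u) = u exactly for u ∈ [a↓_{k+1}, a↓_k] (with a↓_{n+1} := −∞), and F_r(u) < u otherwise. -/
open Finset

/-- The relaxed function `F_r`. -/
noncomputable def Fr (n k : ℕ) (r : ℝ) (a : Fin n → ℝ) : ℝ → ℝ :=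
  fun u => (1 / (k : ℝ)) * (r - ∑ i : Fin n, max (a i - u) 0)

/-!
Writing `s = a↓` and `(x)₊ = max x 0`, term by term `(s i - u)₊ ≥ s i - u` for `i < k` and
`(s i - u)₊ ≥ 0` for `i ≥ k`, so `g(u) := k u + ∑ (a i - u)₊ ≥ T_k(a)`, with equality exactly
when `s k ≤ u ≤ s (k - 1)`; in particular `T_k(a) = min g`, attained at `u = s (k - 1)`.
Since `k (F_r(u) - u) = r - g(u)`, the three cases follow by comparing `r` with `min g`.
-/

section

variable {n k : ℕ}

lemma sortDesc_antitone (a : Fin n → ℝ) : Antitone (sortDesc n a) :=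
  fun _ _ hij => Tuple.monotone_sort a (Fin.rev_le_rev.mpr hij)

lemma sum_comp_sortDesc (a : Fin n → ℝ) (f : ℝ → ℝ) :
    ∑ i, f (sortDesc n a i) = ∑ i, f (a i) :=
  Fintype.sum_equiv (Fin.revPerm.trans (Tuple.sort a)) _ _ fun _ => rfl

lemma ite_le_max_zero {α : Type*} [LinearOrder α] [Zero α] (p : Prop) [Decidable p] (x : α) :
    (if p then x else 0) ≤ max x 0 := by
  split_ifs
  exacts [le_max_left x 0, le_max_right x 0]

lemma ite_eq_max_zero_iff {α : Type*} [LinearOrder α] [Zero α] (p : Prop) [Decidable p]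
    (x : α) :
    (if p then x else 0) = max x 0 ↔ (p → 0 ≤ x) ∧ (¬p → x ≤ 0) := by
  split_ifs with hp
  · simp [hp, eq_comm (a := x)]
  · simp [hp, eq_comm (a := (0 : α))]

lemma sum_ite_lt_sortDesc_sub (hk : k ≤ n) (a : Fin n → ℝ) (u : ℝ) :
    ∑ i : Fin n, (if (i : ℕ) < k then sortDesc n a i - u else 0) = topKSum n k a - k * u := by
  have hsplit : ∀ i : Fin n, (if (i : ℕ) < k then sortDesc n a i - u else 0) =
      (if (i : ℕ) < k then sortDesc n a i else 0) - (if (i : ℕ) < k then u else 0) := by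
    intro i; split_ifs <;> simp
  rw [Fintype.sum_congr _ _ hsplit, sum_sub_distrib, ← topKSum, ← sum_filter, sum_const,
    Fin.card_filter_val_lt, min_eq_right hk, nsmul_eq_mul]

lemma topKSum_le_mul_add_sum_max (hk : k ≤ n) (a : Fin n → ℝ) (u : ℝ) :
    topKSum n k a ≤ k * u + ∑ i, max (a i - u) 0 := by
  rw [← sub_le_iff_le_add', ← sum_ite_lt_sortDesc_sub hk,
    ← sum_comp_sortDesc a fun x => max (x - u) 0]
  exact sum_le_sum fun i _ => ite_le_max_zero _ _

lemma mul_add_sum_max_eq_topKSum_iff (hk1 : 1 ≤ k) (hk2 : k ≤ n) (a : Fin n → ℝ)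
    (u : ℝ) :
    k * u + ∑ i, max (a i - u) 0 = topKSum n k a ↔
      (∀ h : k < n, sortDesc n a ⟨k, h⟩ ≤ u) ∧
        u ≤ sortDesc n a ⟨k - 1, Nat.sub_one_lt_of_le hk1 hk2⟩ := by
  rw [← eq_sub_iff_add_eq', ← sum_ite_lt_sortDesc_sub hk2,
    ← sum_comp_sortDesc a fun x => max (x - u) 0, eq_comm,
    sum_eq_sum_iff_of_le fun i _ => ite_le_max_zero _ _]
  simp only [mem_univ, true_implies, ite_eq_max_zero_iff, sub_nonneg, sub_nonpos, not_lt]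
  constructor
  · intro h
    exact ⟨fun hkn => (h ⟨k, hkn⟩).2 le_rfl, (h ⟨k - 1, by omega⟩).1 (by simp; omega)⟩
  · rintro ⟨h_le, le_h⟩ i
    refine ⟨fun hi => le_h.trans (sortDesc_antitone a ?_),
      fun hi => (sortDesc_antitone a ?_).trans (h_le (hi.trans_lt i.isLt))⟩
    all_goals rw [Fin.le_def]; simp; omega

end

section

variable {n k : ℕ} {r : ℝ} {a : Fin n → ℝ} {u : ℝ}

lemma Fr_lt_iff (hk : k ≠ 0) : Fr n k r a u < u ↔ r < k * u + ∑ i, max (a i - u) 0 := by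
  rw [Fr, one_div, inv_mul_lt_iff₀ (by positivity), sub_lt_iff_lt_add]

lemma lt_Fr_iff (hk : k ≠ 0) : u < Fr n k r a u ↔ k * u + ∑ i, max (a i - u) 0 < r := by
  rw [Fr, one_div, lt_inv_mul_iff₀ (by positivity), lt_sub_iff_add_lt]

lemma Fr_eq_iff (hk : k ≠ 0) : Fr n k r a u = u ↔ r = k * u + ∑ i, max (a i - u) 0 := by
  rw [Fr, one_div, inv_mul_eq_iff_eq_mul₀ (by positivity), sub_eq_iff_eq_add]

end

/-- If `r < T_k(a)` then `F_r(u) < u` everywhere; if `r > T_k(a)` then `F_r(u) > u`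
for some `u`; and if `r = T_k(a)` then `F_r(u) = u` exactly on `[a↓_{k+1}, a↓_k]`
(with `a↓_{n+1} = −∞`). -/
theorem stmt10 (n k : ℕ) (hk1 : 1 ≤ k) (hk2 : k ≤ n) (r : ℝ)
    (a : Fin n → ℝ) :
    (r < topKSum n k a → ∀ u : ℝ, Fr n k r a u < u) ∧
    (topKSum n k a < r → ∃ u : ℝ, u < Fr n k r a u) ∧
    (r = topKSum n k a → ∀ u : ℝ,
      (Fr n k r a u = u ↔
        ((∀ h : k < n, sortDesc n a ⟨k, h⟩ ≤ u) ∧ u ≤ sortDesc n a ⟨k - 1, by omega⟩))) := by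
  have hk : k ≠ 0 := by omega
  refine ⟨fun hr u => ?_, fun hr => ?_, fun hr u => ?_⟩
  · exact (Fr_lt_iff hk).2 (hr.trans_le (topKSum_le_mul_add_sum_max hk2 a u))
  · set u := sortDesc n a ⟨k - 1, by omega⟩
    have hmin : k * u + ∑ i, max (a i - u) 0 = topKSum n k a :=
      (mul_add_sum_max_eq_topKSum_iff hk1 hk2 a u).2
        ⟨fun _ => sortDesc_antitone a (by rw [Fin.le_def]; simp), le_rfl⟩
    exact ⟨u, (lt_Fr_iff hk).2 (hmin.trans_lt hr)⟩
  · rw [Fr_eq_iff hk, hr, eq_comm, mul_add_sum_max_eq_topKSum_iff hk1 hk2]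
end

section
/- For u > a↓_k (so m := |{i : a_i ≥ u}| < k), there is a unique l < a↓_{k+1} with g_r(u, l) = 0, and it satisfies l = (∑_{i : G_r(u) ≤ a_i < u} a_i − (k − m) u) / (|{i : G_r(u) ≤ a_i < u}| − (k − m)), where G_r(u) denotes this unique root. -/
open Finset

/-- The relaxed function `g_r(u, l)`. -/
noncomputable def grfun (n k : ℕ) (a : Fin n → ℝ) (u l : ℝ) : ℝ :=
  (∑ i : Fin n, max (a i - u) 0) - (∑ i : Fin n, max (a i - l) 0) + k * (u - l)

private lemma card_filter_perm {n : ℕ} (σ : Equiv.Perm (Fin n)) (p : Fin n → Prop)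
    [DecidablePred p] :
    ((univ : Finset (Fin n)).filter fun i => p (σ i)).card = (univ.filter p).card := by
  apply Finset.card_bij (fun i _ => σ i)
  · intro i hi
    simp only [Finset.mem_filter, Finset.mem_univ, true_and] at hi ⊢
    exact hi
  · intro i _ j _ hij
    exact σ.injective hij
  · intro j hj
    refine ⟨σ.symm j, ?_, by simp⟩
    simp only [Finset.mem_filter, Finset.mem_univ, true_and] at hj ⊢
    simpa using hj

private lemma max_ite (t x : ℝ) : max (x - t) 0 = if t ≤ x then x - t else 0 := by
  rcases le_or_gt t x with h | h
  · rw [if_pos h, max_eq_left (by linarith)]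
  · rw [if_neg (not_le.2 h), max_eq_right (by linarith)]

/-- For `u > a↓_k` there is a unique `l < a↓_{k+1}` with `g_r(u, l) = 0`, and it
satisfies the stated ratio formula, with `m = |{i : a_i ≥ u}|`. -/
theorem stmt13 (n k : ℕ) (hn : 2 ≤ n) (hk1 : 1 ≤ k) (hk : k < n) (a : Fin n → ℝ)
    (u : ℝ) (hu : sortDesc n a ⟨k - 1, by omega⟩ < u) :
    (∃! l : ℝ, l < sortDesc n a ⟨k, hk⟩ ∧ grfun n k a u l = 0) ∧
    ∀ l : ℝ, l < sortDesc n a ⟨k, hk⟩ → grfun n k a u l = 0 →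
      l = ((∑ i ∈ Finset.univ.filter fun i : Fin n => l ≤ a i ∧ a i < u, a i)
            - ((k : ℝ) - ((Finset.univ.filter fun i : Fin n => u ≤ a i).card : ℝ)) * u)
          / (((Finset.univ.filter fun i : Fin n => l ≤ a i ∧ a i < u).card : ℝ)
            - ((k : ℝ) - ((Finset.univ.filter fun i : Fin n => u ≤ a i).card : ℝ))) := by
  have hb : Monotone (a ∘ Tuple.sort a) := Tuple.monotone_sort a
  set M : Finset (Fin n) := univ.filter (fun i => u ≤ a i) with hM
  set m : ℕ := M.card with hm
  set dk : ℝ := sortDesc n a ⟨k, hk⟩ with hdk_def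
  have hdk : dk = a (Tuple.sort a ⟨n - 1 - k, by omega⟩) := by
    rw [hdk_def]
    unfold sortDesc
    congr 2
    ext
    rw [Fin.val_rev]
    simp
    omega
  have hdk1 : sortDesc n a ⟨k - 1, by omega⟩ = a (Tuple.sort a ⟨n - k, by omega⟩) := by
    unfold sortDesc
    congr 2
    ext
    rw [Fin.val_rev]
    simp
    omega
  have hu' : a (Tuple.sort a ⟨n - k, by omega⟩) < u := by rw [← hdk1]; exact hu
  have hdklt : dk < u := by
    refine lt_of_le_of_lt ?_ hu'
    rw [hdk]
    exact hb (show (⟨n - 1 - k, by omega⟩ : Fin n) ≤ ⟨n - k, by omega⟩ from by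
      simp only [Fin.mk_le_mk]; omega)
  -- counting facts
  have factA : m + 1 ≤ k := by
    have h1 : m = ((univ : Finset (Fin n)).filter fun j => u ≤ a (Tuple.sort a j)).card :=
      (card_filter_perm (Tuple.sort a) (fun i => u ≤ a i)).symm
    have h2 : ((univ : Finset (Fin n)).filter fun j => u ≤ a (Tuple.sort a j)) ⊆
        Finset.Ioi (⟨n - k, by omega⟩ : Fin n) := by
      intro j hj
      simp only [Finset.mem_filter, Finset.mem_univ, true_and] at hj
      rw [Finset.mem_Ioi]
      by_contra hc
      have hle : j ≤ (⟨n - k, by omega⟩ : Fin n) := not_lt.1 hc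
      have h3 : a (Tuple.sort a j) ≤ a (Tuple.sort a ⟨n - k, by omega⟩) := hb hle
      linarith
    have h4 := Finset.card_le_card h2
    rw [Fin.card_Ioi] at h4
    simp only [← h1] at h4
    omega
  have factB : ∀ l : ℝ, l ≤ dk → k + 1 ≤ ((univ : Finset (Fin n)).filter fun i => l ≤ a i).card := by
    intro l hl
    rw [← card_filter_perm (Tuple.sort a) (fun i => l ≤ a i)]
    have h2 : Finset.Ici (⟨n - 1 - k, by omega⟩ : Fin n) ⊆
        ((univ : Finset (Fin n)).filter fun j => l ≤ a (Tuple.sort a j)) := by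
      intro j hj
      rw [Finset.mem_Ici] at hj
      have h3 : a (Tuple.sort a ⟨n - 1 - k, by omega⟩) ≤ a (Tuple.sort a j) := hb hj
      simp only [Finset.mem_filter, Finset.mem_univ, true_and]
      rw [hdk] at hl
      linarith
    have h4 := Finset.card_le_card h2
    rw [Fin.card_Ici] at h4
    simp only at h4
    omega
  have factC : ((univ : Finset (Fin n)).filter fun i => dk < a i).card ≤ k := by
    rw [← card_filter_perm (Tuple.sort a) (fun i => dk < a i)]
    have h2 : ((univ : Finset (Fin n)).filter fun j => dk < a (Tuple.sort a j)) ⊆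
        Finset.Ioi (⟨n - 1 - k, by omega⟩ : Fin n) := by
      intro j hj
      simp only [Finset.mem_filter, Finset.mem_univ, true_and] at hj
      rw [Finset.mem_Ioi]
      by_contra hc
      have hle : j ≤ (⟨n - 1 - k, by omega⟩ : Fin n) := not_lt.1 hc
      have h3 : a (Tuple.sort a j) ≤ a (Tuple.sort a ⟨n - 1 - k, by omega⟩) := hb hle
      rw [hdk] at hj
      linarith
    have h4 := Finset.card_le_card h2
    rw [Fin.card_Ioi] at h4
    simp only at h4
    omega
  -- the auxiliary function h
  set h : ℝ → ℝ := fun l => (∑ i : Fin n, max (a i - l) 0) + k * l with hh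
  have key0 : ∀ l : ℝ, grfun n k a u l = h u - h l := by
    intro l
    simp only [grfun, hh]
    ring
  -- strict antitonicity on (-∞, dk]
  have hanti : ∀ x y : ℝ, x < y → y ≤ dk → h y < h x := by
    intro x y hxy hy
    have hcard := factB y hy
    have hterm : ∀ i : Fin n,
        (if y ≤ a i then y - x else 0) ≤ max (a i - x) 0 - max (a i - y) 0 := by
      intro i
      rcases le_or_gt y (a i) with h1 | h1
      · rw [if_pos h1, max_eq_left (by linarith), max_eq_left (by linarith)]
        linarith
      · rw [if_neg (not_le.2 h1), max_eq_right (show a i - y ≤ (0:ℝ) by linarith)]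
        have := le_max_right (a i - x) (0 : ℝ)
        linarith
    have hsum : ∑ i : Fin n, (if y ≤ a i then y - x else 0) ≤
        ∑ i : Fin n, (max (a i - x) 0 - max (a i - y) 0) :=
      Finset.sum_le_sum fun i _ => hterm i
    have hsum2 : ∑ i : Fin n, (if y ≤ a i then y - x else 0) =
        (((univ : Finset (Fin n)).filter fun i => y ≤ a i).card : ℝ) * (y - x) := by
      rw [← Finset.sum_filter, Finset.sum_const, nsmul_eq_mul]
    have hd : h x - h y = (∑ i : Fin n, (max (a i - x) 0 - max (a i - y) 0)) + k * (x - y) := by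
      simp only [hh]
      rw [Finset.sum_sub_distrib]
      ring
    have hc : ((k : ℝ) + 1) ≤ (((univ : Finset (Fin n)).filter fun i => y ≤ a i).card : ℝ) := by
      exact_mod_cast hcard
    have hprod : ((k : ℝ) + 1) * (y - x) ≤
        (((univ : Finset (Fin n)).filter fun i => y ≤ a i).card : ℝ) * (y - x) :=
      mul_le_mul_of_nonneg_right hc (by linarith)
    linarith
  -- h dk < h u
  have hstep : h dk < h u := by
    set S' : Finset (Fin n) := univ.filter (fun i => dk < a i ∧ a i < u) with hS'
    have hdisj : Disjoint S' M := by
      rw [Finset.disjoint_left]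
      intro i hi hiM
      rw [hS', Finset.mem_filter] at hi
      rw [hM, Finset.mem_filter] at hiM
      linarith [hi.2.2, hiM.2]
    have hsub : S' ∪ M ⊆ (univ : Finset (Fin n)).filter fun i => dk < a i := by
      intro i hi
      rcases Finset.mem_union.1 hi with h1 | h1
      · rw [hS', Finset.mem_filter] at h1
        simp only [Finset.mem_filter, Finset.mem_univ, true_and]
        exact h1.2.1
      · rw [hM, Finset.mem_filter] at h1
        simp only [Finset.mem_filter, Finset.mem_univ, true_and]
        linarith [h1.2]
    have hcards : S'.card + m ≤ k := by
      have h1 := Finset.card_le_card hsub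
      rw [Finset.card_union_of_disjoint hdisj] at h1
      exact le_trans h1 factC
    have hterm : ∀ i : Fin n, max (a i - u) 0 - max (a i - dk) 0 =
        (if u ≤ a i then dk - u else 0) - (if dk < a i ∧ a i < u then a i - dk else 0) := by
      intro i
      rcases le_or_gt u (a i) with h1 | h1
      · rw [if_pos h1, if_neg (fun hc => absurd hc.2 (not_lt.2 h1)),
          max_eq_left (by linarith), max_eq_left (by linarith)]
        ring
      · rcases le_or_gt (a i) dk with h2 | h2
        · rw [if_neg (not_le.2 h1), if_neg (fun hc => absurd hc.1 (not_lt.2 h2)),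
            max_eq_right (by linarith), max_eq_right (by linarith)]
        · rw [if_neg (not_le.2 h1), if_pos ⟨h2, h1⟩, max_eq_right (by linarith),
            max_eq_left (by linarith)]
    have hsum : (∑ i : Fin n, max (a i - u) 0) - ∑ i : Fin n, max (a i - dk) 0 =
        (m : ℝ) * (dk - u) - ∑ i ∈ S', (a i - dk) := by
      rw [← Finset.sum_sub_distrib]
      rw [Finset.sum_congr rfl fun i _ => hterm i]
      rw [Finset.sum_sub_distrib, ← Finset.sum_filter, ← Finset.sum_filter,
        Finset.sum_const, nsmul_eq_mul]
    have hbound : ∑ i ∈ S', (a i - dk) < ((k : ℝ) - m) * (u - dk) := by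
      have hkm : (m : ℝ) + 1 ≤ (k : ℝ) := by exact_mod_cast factA
      rcases S'.eq_empty_or_nonempty with he | hne
      · rw [he, Finset.sum_empty]
        nlinarith
      · have h1 : ∑ i ∈ S', (a i - dk) < ∑ i ∈ S', (u - dk) := by
          refine Finset.sum_lt_sum_of_nonempty hne fun i hi => ?_
          rw [hS', Finset.mem_filter] at hi
          linarith [hi.2.2]
        rw [Finset.sum_const, nsmul_eq_mul] at h1
        have h2 : (S'.card : ℝ) + m ≤ (k : ℝ) := by exact_mod_cast hcards
        nlinarith
    have hdiff : h u - h dk = ((m : ℝ) * (dk - u) - ∑ i ∈ S', (a i - dk)) + k * (u - dk) := by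
      simp only [hh]
      rw [← hsum]
      ring
    nlinarith
  -- existence via IVT
  have hne : (univ : Finset (Fin n)).Nonempty := ⟨⟨0, by omega⟩, Finset.mem_univ _⟩
  set L : ℝ := min (univ.inf' hne a) ((∑ i : Fin n, a i - h u) / ((n : ℝ) - k)) with hL
  have hLdk : L ≤ dk := by
    refine le_trans (min_le_left _ _) ?_
    rw [hdk]
    exact Finset.inf'_le a (Finset.mem_univ _)
  have hnk : (0 : ℝ) < (n : ℝ) - k := by
    have : (k : ℝ) < n := by exact_mod_cast hk
    linarith
  have hhL : h u ≤ h L := by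
    have h1 : ∀ i : Fin n, max (a i - L) 0 = a i - L := by
      intro i
      have h2 := Finset.inf'_le a (Finset.mem_univ i)
      have h3 := min_le_left (univ.inf' hne a) ((∑ i : Fin n, a i - h u) / ((n : ℝ) - k))
      refine max_eq_left ?_
      rw [hL]
      linarith
    have h2 : h L = (∑ i : Fin n, a i) - (n : ℝ) * L + k * L := by
      simp only [hh]
      rw [Finset.sum_congr rfl fun i _ => h1 i, Finset.sum_sub_distrib, Finset.sum_const,
        nsmul_eq_mul, Finset.card_univ, Fintype.card_fin]
    have h3 : L ≤ (∑ i : Fin n, a i - h u) / ((n : ℝ) - k) := min_le_right _ _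
    rw [le_div_iff₀ hnk] at h3
    rw [h2]
    nlinarith
  have hcont : Continuous h := by
    refine Continuous.add ?_ (continuous_const.mul continuous_id)
    exact continuous_finset_sum _ fun i _ =>
      (continuous_const.sub continuous_id).max continuous_const
  have hIcc := intermediate_value_Icc' hLdk hcont.continuousOn
  obtain ⟨l₀, hl₀mem, hl₀⟩ := hIcc ⟨le_of_lt hstep, hhL⟩
  have hl₀dk : l₀ < dk := by
    refine lt_of_le_of_ne hl₀mem.2 fun he => ?_
    rw [he] at hl₀
    rw [hl₀] at hstep
    exact lt_irrefl _ hstep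
  have huniq : ∀ x y : ℝ, x < dk → y < dk → h x = h u → h y = h u → x = y := by
    intro x y hx hy hxe hye
    rcases lt_trichotomy x y with hlt | heq | hlt
    · have := hanti x y hlt (le_of_lt hy)
      rw [hxe, hye] at this
      exact absurd this (lt_irrefl _)
    · exact heq
    · have := hanti y x hlt (le_of_lt hx)
      rw [hxe, hye] at this
      exact absurd this (lt_irrefl _)
  constructor
  · refine ⟨l₀, ⟨hl₀dk, by rw [key0, hl₀, sub_self]⟩, ?_⟩
    rintro y ⟨hy1, hy2⟩
    have hy3 : h y = h u := by
      have := key0 y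
      rw [hy2] at this
      linarith
    exact huniq y l₀ hy1 hl₀dk hy3 hl₀
  · intro l hldk hg
    have hlhu : h l = h u := by
      have := key0 l
      rw [hg] at this
      linarith
    have hlu : l < u := lt_trans hldk hdklt
    set S : Finset (Fin n) := univ.filter (fun i => l ≤ a i ∧ a i < u) with hS
    have hcardB := factB l (le_of_lt hldk)
    have hsub : ((univ : Finset (Fin n)).filter fun i => l ≤ a i) ⊆ S ∪ M := by
      intro i hi
      simp only [Finset.mem_filter, Finset.mem_univ, true_and] at hi
      rcases lt_or_ge (a i) u with h1 | h1
      · refine Finset.mem_union_left _ ?_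
        rw [hS, Finset.mem_filter]
        exact ⟨Finset.mem_univ _, hi, h1⟩
      · refine Finset.mem_union_right _ ?_
        rw [hM, Finset.mem_filter]
        exact ⟨Finset.mem_univ _, h1⟩
    have hcards : k + 1 ≤ S.card + m :=
      le_trans hcardB (le_trans (Finset.card_le_card hsub) (Finset.card_union_le _ _))
    have e1 : ∑ i : Fin n, max (a i - l) 0 =
        ((∑ i ∈ S, a i) - (S.card : ℝ) * l) + ((∑ i ∈ M, a i) - (m : ℝ) * l) := by
      have step1 : ∑ i : Fin n, max (a i - l) 0 =
          ∑ i : Fin n, ((if l ≤ a i ∧ a i < u then a i - l else 0)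
            + (if u ≤ a i then a i - l else 0)) := by
        refine Finset.sum_congr rfl fun i _ => ?_
        rw [max_ite]
        by_cases h1 : u ≤ a i
        · rw [if_pos (le_trans hlu.le h1), if_neg (fun hc => absurd hc.2 (not_lt.2 h1)),
            if_pos h1]
          ring
        · rw [if_neg h1]
          by_cases h2 : l ≤ a i
          · rw [if_pos h2, if_pos ⟨h2, not_le.1 h1⟩]
            ring
          · rw [if_neg h2, if_neg (fun hc => h2 hc.1)]
            ring
      rw [step1, Finset.sum_add_distrib, ← Finset.sum_filter, ← Finset.sum_filter,
        Finset.sum_sub_distrib, Finset.sum_sub_distrib, Finset.sum_const, Finset.sum_const,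
        nsmul_eq_mul, nsmul_eq_mul]
    have e2 : ∑ i : Fin n, max (a i - u) 0 = (∑ i ∈ M, a i) - (m : ℝ) * u := by
      rw [Finset.sum_congr rfl fun i _ => max_ite u (a i), ← Finset.sum_filter,
        Finset.sum_sub_distrib, Finset.sum_const, nsmul_eq_mul]
    have heq : (∑ i ∈ S, a i) - (S.card : ℝ) * l - (m : ℝ) * l + k * l
        = k * u - (m : ℝ) * u := by
      have h5 := hlhu
      simp only [hh] at h5
      rw [e1, e2] at h5
      linarith
    have hden : (0 : ℝ) < (S.card : ℝ) - ((k : ℝ) - m) := by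
      have : (k : ℝ) + 1 ≤ (S.card : ℝ) + m := by exact_mod_cast hcards
      linarith
    rw [eq_div_iff (ne_of_gt hden)]
    linarith [heq]
end

section
/- In the setting of the lower-bound iteration: if ρ ≤ G_r(u), |v| > k − m contains all a_i with a_i > ρ and a_i < u, every element of v exceeds ρ, and ρ = (∑_{a∈v} a − (k−m)u)/(|v| − (k−m)), then ρ = G_r(u). -/
open Finset

/-!
Write `φ x = ∑ i, max (a i - x) 0 + k * x`, a convex function with
`grfun n k a u l = φ u - φ l`. Once `v` is identified with the entries in `(ρ, u)`,
the ratio defining `ρ` says exactly `φ ρ = φ u`, and the root condition says `φ Gu = φ u`.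
Just below `u` only the `m < k` entries `≥ u` are active, so `φ` has slope `k - m > 0`
there and `φ l < φ u` for some `l ∈ (Gu, u)`. A convex function taking equal values at
`ρ < Gu` cannot drop below that value to the right of `Gu`, hence `ρ = Gu`.
-/

open Filter Topology

theorem ConvexOn.sum {ι 𝕜 E β : Type*} [Semiring 𝕜] [PartialOrder 𝕜] [AddCommMonoid E]
    [AddCommMonoid β] [PartialOrder β] [IsOrderedAddMonoid β] [SMul 𝕜 E] [Module 𝕜 β]
    {s : Set E} (hs : Convex 𝕜 s) (t : Finset ι) {f : ι → E → β}
    (hf : ∀ i ∈ t, ConvexOn 𝕜 s (f i)) : ConvexOn 𝕜 s fun x => ∑ i ∈ t, f i x := by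
  classical
  induction t using Finset.induction_on with
  | empty => simpa using convexOn_const (0 : β) hs
  | insert j t hj ih =>
    simp only [Finset.sum_insert hj]
    exact (hf j (mem_insert_self j t)).add (ih fun i hi => hf i (mem_insert_of_mem hi))

theorem convexOn_max_sub_zero (c : ℝ) : ConvexOn ℝ Set.univ fun x : ℝ => max (c - x) 0 :=
  ((convexOn_const c convex_univ).sub (concaveOn_id convex_univ)).sup
    (convexOn_const 0 convex_univ)

theorem convexOn_sum_max_sub_add_mul {ι : Type*} [Fintype ι] (a : ι → ℝ) {k : ℝ}
    (hk : 0 ≤ k) :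
    ConvexOn ℝ Set.univ fun x : ℝ => ∑ i, max (a i - x) 0 + k * x :=
  (ConvexOn.sum convex_univ univ fun i _ => convexOn_max_sub_zero (a i)).add
    ((convexOn_id convex_univ).smul hk)

theorem max_sub_zero_sub_max_sub_zero {t x u : ℝ} (hxu : x ≤ u) :
    max (t - x) 0 - max (t - u) 0
      = (if u ≤ t then u - x else 0) + (if x < t ∧ t < u then t - x else 0) := by
  by_cases htu : u ≤ t
  · simp [htu, not_lt.2 htu, max_eq_left (by linarith : (0:ℝ) ≤ t - x)]
  by_cases hxt : x < t
  · simp [htu, hxt, not_le.1 htu, max_eq_left (by linarith : (0:ℝ) ≤ t - x),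
      max_eq_right (by linarith : t - u ≤ 0)]
  · simp [htu, hxt, max_eq_right (by linarith : t - x ≤ 0),
      max_eq_right (by linarith : t - u ≤ 0)]

theorem sum_max_sub_zero_sub_sum_max_sub_zero {ι : Type*} [Fintype ι] (a : ι → ℝ) {x u : ℝ}
    (hxu : x ≤ u) :
    ∑ i, max (a i - x) 0 - ∑ i, max (a i - u) 0
      = #(univ.filter fun i => u ≤ a i) * (u - x)
        + ∑ i ∈ univ.filter (fun i => x < a i ∧ a i < u), (a i - x) := by
  classical
  rw [← sum_sub_distrib]
  simp only [max_sub_zero_sub_max_sub_zero hxu, sum_add_distrib, ← sum_filter, sum_const,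
    nsmul_eq_mul]

theorem sum_max_sub_zero_sub_sum_max_sub_zero_of_eq_div {ι : Type*} [Fintype ι] (a : ι → ℝ)
    {k ρ u : ℝ} (hρu : ρ ≤ u)
    (hcard : k - #(univ.filter fun i => u ≤ a i)
      < #(univ.filter fun i => ρ < a i ∧ a i < u))
    (hρ : ρ = (∑ i ∈ univ.filter (fun i => ρ < a i ∧ a i < u), a i
        - (k - #(univ.filter fun i => u ≤ a i)) * u)
      / (#(univ.filter fun i => ρ < a i ∧ a i < u) - (k - #(univ.filter fun i => u ≤ a i)))) :
    ∑ i, max (a i - ρ) 0 - ∑ i, max (a i - u) 0 = k * (u - ρ) := by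
  rw [eq_div_iff (sub_pos.2 hcard).ne'] at hρ
  rw [sum_max_sub_zero_sub_sum_max_sub_zero a hρu, sum_sub_distrib, sum_const, nsmul_eq_mul]
  linarith

theorem Multiset.eq_filter_and_of_le {α : Type*} {p q : α → Prop} [DecidablePred p]
    [DecidablePred q] {s v : Multiset α} (hle : v ≤ s.filter q)
    (hge : s.filter (fun x => p x ∧ q x) ≤ v) (hp : ∀ x ∈ v, p x) :
    v = s.filter fun x => p x ∧ q x := by
  refine le_antisymm (Multiset.le_filter.2 ⟨hle.trans (Multiset.filter_le _ _), fun x hx => ?_⟩)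
    hge
  exact ⟨hp x hx, (Multiset.mem_filter.1 (Multiset.mem_of_le hle hx)).2⟩

theorem exists_mem_Ioo_forall_lt_imp_le {ι : Type*} [Finite ι] (a : ι → ℝ) {b u : ℝ}
    (hbu : b < u) : ∃ l ∈ Set.Ioo b u, ∀ i, a i < u → a i ≤ l := by
  have hnear : ∀ᶠ l in 𝓝[<] u, ∀ i, a i < u → a i ≤ l := eventually_all.2 fun i => by
    by_cases hi : a i < u
    · filter_upwards [Ioo_mem_nhdsLT hi] with l hl using fun _ => hl.1.le
    · exact Eventually.of_forall fun _ h => absurd h hi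
  exact (Eventually.and (Ioo_mem_nhdsLT hbu) hnear).exists

/-- Termination of the lower-bound iteration: if `ρ ≤ G_r(u)`, `v` contains every
entry `a_i` with `ρ < a_i < u`, every element of `v` exceeds `ρ`, `|v| > k − m`,
and `ρ` equals the stated ratio, then `ρ = G_r(u)`. -/
theorem stmt15 (n k : ℕ) (a : Fin n → ℝ)
    (u Gu : ℝ) (hGu : Gu < u) (hroot : grfun n k a u Gu = 0)
    (m : ℕ) (hm : m = (Finset.univ.filter fun i : Fin n => u ≤ a i).card)
    (hmk : m < k)
    (v : Multiset ℝ)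
    (hhigh : v ≤ (Finset.univ.val.map a).filter (fun x => x < u))
    (ρ : ℝ) (hρGu : ρ ≤ Gu)
    (hcard : (k : ℝ) - (m : ℝ) < (Multiset.card v : ℝ))
    (hcontain : (Finset.univ.val.map a).filter (fun x => ρ < x ∧ x < u) ≤ v)
    (habove : ∀ x ∈ v, ρ < x)
    (hρ : ρ = (v.sum - ((k : ℝ) - (m : ℝ)) * u)
        / ((Multiset.card v : ℝ) - ((k : ℝ) - (m : ℝ)))) :
    ρ = Gu := by
  subst hm
  have hv := Multiset.eq_filter_and_of_le hhigh hcontain habove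
  rw [Multiset.filter_map] at hv
  have hvsum : v.sum = ∑ i ∈ univ.filter (fun i => ρ < a i ∧ a i < u), a i := by rw [hv]; rfl
  have hvcard : Multiset.card v = #(univ.filter fun i => ρ < a i ∧ a i < u) := by
    rw [hv, Multiset.card_map]; rfl
  rw [hvsum, hvcard] at hρ
  rw [hvcard] at hcard
  set φ : ℝ → ℝ := fun x => ∑ i, max (a i - x) 0 + k * x with hφ
  have hφρ : φ ρ = φ u := by
    have := sum_max_sub_zero_sub_sum_max_sub_zero_of_eq_div a (hρGu.trans hGu.le) hcard hρ
    simp only [hφ]; linarith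
  have hφGu : φ Gu = φ u := by
    unfold grfun at hroot; simp only [hφ]; linarith
  obtain ⟨l, ⟨hGul, hlu⟩, hl⟩ := exists_mem_Ioo_forall_lt_imp_le a hGu
  have hφl : φ l < φ u := by
    have hnone : ∀ i ∈ univ, ¬(l < a i ∧ a i < u) := fun i _ hi => not_lt.2 (hl i hi.2) hi.1
    have := sum_max_sub_zero_sub_sum_max_sub_zero a hlu.le
    rw [filter_false_of_mem hnone, sum_empty] at this
    have hmkR : (#(univ.filter fun i => u ≤ a i) : ℝ) < k := by exact_mod_cast hmk
    have := mul_lt_mul_of_pos_right hmkR (sub_pos.2 hlu)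
    simp only [hφ]; linarith
  by_contra hne
  have := (convexOn_sum_max_sub_add_mul a (Nat.cast_nonneg k)).le_right_of_left_le''
    (Set.mem_univ ρ) (Set.mem_univ l) (lt_of_le_of_ne hρGu hne) hGul.le
    (hφρ.trans hφGu.symm).le
  linarith
end

section
/- The coordinate formulas derived from the KKT conditions hold: if (x*, λ*, α*, β*) satisfies the KKT conditions of the sorted reformulation of the top-k-sum projection (with a sorted nonincreasingly), then for i ≤ k−1, α*_i = max{x*_k + λ* − a_i, 0} and x*_i = max{a_i − λ*, x*_k}; and for j ≥ k+1, β*_j = max{a_j − x*_k, 0} and x*_j = min{a_j, x*_k}. -/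
open Finset

/-- Coordinate formulas for the multipliers and the solution derived from the KKT
conditions of the sorted reformulation of the top-`k`-sum projection. Coordinates
are indexed by `Fin n`, so the paper's coordinate `k` is the index `⟨k-1, _⟩`. -/
theorem stmt19 (n k : ℕ) (hn : 2 ≤ n) (hk2 : 2 ≤ k) (hk : k ≤ n - 1) (r : ℝ)
    (a x α β : Fin n → ℝ) (lam : ℝ)
    (hsort : ∀ i j : Fin n, i ≤ j → a j ≤ a i)
    (hfeas1 : (∑ i : Fin n, if (i : ℕ) < k then x i else 0) ≤ r)
    (hfeas2 : ∀ i : Fin n, (i : ℕ) < k - 1 → x ⟨k - 1, by omega⟩ ≤ x i)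
    (hfeas3 : ∀ j : Fin n, k ≤ (j : ℕ) → x j ≤ x ⟨k - 1, by omega⟩)
    (hlam : 0 ≤ lam)
    (hα : ∀ i : Fin n, (i : ℕ) < k - 1 → 0 ≤ α i)
    (hβ : ∀ j : Fin n, k ≤ (j : ℕ) → 0 ≤ β j)
    (hstat1 : ∀ i : Fin n, (i : ℕ) < k - 1 → x i - a i + lam - α i = 0)
    (hstat2 : x ⟨k - 1, by omega⟩ - a ⟨k - 1, by omega⟩ + lam
        + (∑ i : Fin n, if (i : ℕ) < k - 1 then α i else 0)
        - (∑ j : Fin n, if k ≤ (j : ℕ) then β j else 0) = 0)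
    (hstat3 : ∀ j : Fin n, k ≤ (j : ℕ) → x j - a j + β j = 0)
    (hcs1 : lam * ((∑ i : Fin n, if (i : ℕ) < k then x i else 0) - r) = 0)
    (hcs2 : ∀ i : Fin n, (i : ℕ) < k - 1 → α i * (x i - x ⟨k - 1, by omega⟩) = 0)
    (hcs3 : ∀ j : Fin n, k ≤ (j : ℕ) → β j * (x ⟨k - 1, by omega⟩ - x j) = 0) :
    (∀ i : Fin n, (i : ℕ) < k - 1 →
      α i = max (x ⟨k - 1, by omega⟩ + lam - a i) 0 ∧
      x i = max (a i - lam) (x ⟨k - 1, by omega⟩)) ∧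
    (∀ j : Fin n, k ≤ (j : ℕ) →
      β j = max (a j - x ⟨k - 1, by omega⟩) 0 ∧
      x j = min (a j) (x ⟨k - 1, by omega⟩)) := by
  constructor
  · intro i hi
    have h1 := hstat1 i hi
    have h2 := hcs2 i hi
    have h3 := hfeas2 i hi
    have h4 := hα i hi
    rcases eq_or_lt_of_le h4 with h0 | h0
    · have hx : x i = a i - lam := by linarith
      constructor
      · rw [← h0]; symm; rw [max_eq_right]; linarith
      · rw [hx]; symm; rw [max_eq_left]; linarith
    · have hx : x i = x ⟨k - 1, by omega⟩ := by
        rcases mul_eq_zero.mp h2 with h | h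
        · linarith
        · linarith
      constructor
      · rw [hx] at h1; symm; rw [max_eq_left] <;> linarith
      · rw [hx]; symm; rw [max_eq_right]; rw [hx] at h1; linarith
  · intro j hj
    have h1 := hstat3 j hj
    have h2 := hcs3 j hj
    have h3 := hfeas3 j hj
    have h4 := hβ j hj
    rcases eq_or_lt_of_le h4 with h0 | h0
    · have hx : x j = a j := by linarith
      constructor
      · rw [← h0]; symm; rw [max_eq_right]; linarith
      · rw [hx]; symm; rw [min_eq_left]; linarith
    · have hx : x j = x ⟨k - 1, by omega⟩ := by
        rcases mul_eq_zero.mp h2 with h | h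
        · linarith
        · linarith
      constructor
      · rw [hx] at h1; symm; rw [max_eq_left] <;> linarith
      · rw [hx]; symm; rw [min_eq_right]; rw [hx] at h1; linarith
end
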